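/- Let E, F, G be Banach ideal spaces on a common σ-finite measure space, with E having the Fatou property, and let 0 < θ < 1. Then M(G, E) ≡ M(G^{1-θ}F^θ, E^{1-θ}F^θ)^{(1-θ)} isometrically, where M(X, Y) = {x ∈ L⁰ : xy ∈ Y for all y ∈ X} with the operator norm ‖x‖ = sup_{‖y‖_X ≤ 1} ‖xy‖_Y. -/

import Mathlib

open MeasureTheory

/-- A Banach ideal space on a measure space: a linear subspace of measurable
functions (mod null sets) with a complete lattice norm having the ideal property,
and a weak unit (saturation). -/
structure IdealSpace {α : Type*} [MeasurableSpace α] (μ : Measure α) where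
  carrier : Set (α → ℝ)
  norm : (α → ℝ) → ℝ
  zero_mem : (0 : α → ℝ) ∈ carrier
  add_mem : ∀ {f g : α → ℝ}, f ∈ carrier → g ∈ carrier → f + g ∈ carrier
  smul_mem : ∀ (c : ℝ) {f : α → ℝ}, f ∈ carrier → c • f ∈ carrier
  norm_nonneg : ∀ f, 0 ≤ norm f
  norm_eq_zero : ∀ f ∈ carrier, (norm f = 0 ↔ f =ᵐ[μ] 0)
  norm_add : ∀ f g, f ∈ carrier → g ∈ carrier → norm (f + g) ≤ norm f + norm g
  norm_smul : ∀ (c : ℝ) (f : α → ℝ), norm (c • f) = |c| * norm f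
  ideal_mem : ∀ {f g : α → ℝ}, g ∈ carrier → (∀ᵐ a ∂μ, |f a| ≤ |g a|) → f ∈ carrier
  ideal_norm : ∀ {f g : α → ℝ}, g ∈ carrier → (∀ᵐ a ∂μ, |f a| ≤ |g a|) → norm f ≤ norm g
  weak_unit : ∃ w ∈ carrier, ∀ᵐ a ∂μ, 0 < w a
  complete : ∀ x : ℕ → α → ℝ, (∀ n, x n ∈ carrier) →
    (∀ ε > 0, ∃ N, ∀ m ≥ N, ∀ n ≥ N, norm (x m - x n) < ε) →
    ∃ f ∈ carrier, Filter.Tendsto (fun n => norm (x n - f)) Filter.atTop (nhds 0)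

variable {α : Type*} [MeasurableSpace α] {μ : Measure α}

/-- The pointwise product space E ⊙ F. -/
def prodSet (E F : IdealSpace μ) : Set (α → ℝ) :=
  {z | ∃ x ∈ E.carrier, ∃ y ∈ F.carrier, z =ᵐ[μ] x * y}

/-- The quasi-norm of the pointwise product space E ⊙ F. -/
noncomputable def prodNorm (E F : IdealSpace μ) (z : α → ℝ) : ℝ :=
  sInf {r | ∃ x ∈ E.carrier, ∃ y ∈ F.carrier, z =ᵐ[μ] x * y ∧ r = E.norm x * F.norm y}

/-- The Fatou property. -/
def HasFatou (E : IdealSpace μ) : Prop :=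
  ∀ (x : ℕ → α → ℝ) (f : α → ℝ), (∀ n, x n ∈ E.carrier) →
    (∀ᵐ a ∂μ, ∀ n, 0 ≤ x n a ∧ x n a ≤ x (n + 1) a) →
    (∀ᵐ a ∂μ, Filter.Tendsto (fun n => x n a) Filter.atTop (nhds (f a))) →
    (∃ C, ∀ n, E.norm (x n) ≤ C) →
    f ∈ E.carrier ∧ Filter.Tendsto (fun n => E.norm (x n)) Filter.atTop (nhds (E.norm f))

/-- The space of pointwise multipliers M(S, T): membership. -/
def multSet (S T : Set (α → ℝ)) : Set (α → ℝ) :=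
  {x | ∀ y ∈ S, x * y ∈ T}

/-- The operator norm of a pointwise multiplier from (S, NS) to (·, NT). -/
noncomputable def multNorm (S : Set (α → ℝ)) (NS NT : (α → ℝ) → ℝ) (x : α → ℝ) : ℝ :=
  sSup {r | ∃ y ∈ S, NS y ≤ 1 ∧ r = NT (x * y)}

/-- The Calderón space X^θ Y^{1-θ}: membership. -/
def caldSet (θ : ℝ) (X Y : IdealSpace μ) : Set (α → ℝ) :=
  {z | ∃ lam > (0 : ℝ), ∃ x ∈ X.carrier, ∃ y ∈ Y.carrier, X.norm x ≤ 1 ∧ Y.norm y ≤ 1 ∧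
      ∀ᵐ a ∂μ, |z a| ≤ lam * |x a| ^ θ * |y a| ^ (1 - θ)}

/-- The Calderón space norm: the infimum of admissible λ. -/
noncomputable def caldNorm (θ : ℝ) (X Y : IdealSpace μ) (z : α → ℝ) : ℝ :=
  sInf {lam | 0 < lam ∧ ∃ x ∈ X.carrier, ∃ y ∈ Y.carrier, X.norm x ≤ 1 ∧ Y.norm y ≤ 1 ∧
      ∀ᵐ a ∂μ, |z a| ≤ lam * |x a| ^ θ * |y a| ^ (1 - θ)}


/-!
Write `β = 1 - θ`. If `‖x g‖_E ≤ M` on the unit ball of `G`, then `|z| ≤ λ |g|^β |f|^{1-β}`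
gives `|x|^β |z| ≤ λ M^β (|x g| / M)^β |f|^{1-β}`, so `|x|^β` has norm at most `M^β` from
`G^β F^{1-β}` to `E^β F^{1-β}`. Membership `x g ∈ E` need not be assumed: it follows from the
norm bound applied to the truncations `min (|x g|) (n u)` and the Fatou property of `E`.

Conversely, if `|x|^β` has norm `D`, then `h = |x g|` satisfies `h^β f^{1-β} ≤ D e^β f'^{1-β}`
for every positive `f` in the unit ball of `F`, with `e`, `f'` in the unit balls of `E` and `F`.
Iterating from a weak unit `f₀` of `F` and telescoping gives
`h^{nβ} f₀^{1-β} ≤ D^n (∏_{k<n} e_k)^β f_n^{1-β}`. As `‖f_n‖_F ≤ 1`, a Borel–Cantelli argument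
in `F` shows that almost everywhere `f_n ≤ r^n f₀` for all large `n` (any `r > 1`), and then
AM–GM bounds `h` by `(D r^{1-β})^{1/β}` times the averages of `e_0, …, e_{n-1}`, which lie in the
unit ball of `E`. The Fatou property gives `‖h‖_E ≤ D^{1/β}`.

Finally, a pointwise multiplier between the Calderón spaces is automatically bounded: otherwise
the `2^{-j}`-weighted sums of witnesses for a sequence of bad elements converge in `G` and `F`
and yield one element of `G^β F^{1-β}` whose image is not in `E^β F^{1-β}`.
-/

open Filter Topology Finset

variable {E F G : IdealSpace μ}

namespace IdealSpace

variable (E) in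
def unitBall : Set (α → ℝ) := {f | f ∈ E.carrier ∧ E.norm f ≤ 1}

variable (E) in
def toSubmodule : Submodule ℝ (α → ℝ) where
  carrier := E.carrier
  add_mem' := E.add_mem
  zero_mem' := E.zero_mem
  smul_mem' := E.smul_mem

protected theorem sub_mem {f g : α → ℝ} (hf : f ∈ E.carrier) (hg : g ∈ E.carrier) :
    f - g ∈ E.carrier :=
  E.toSubmodule.sub_mem hf hg

protected theorem sum_mem {ι : Type*} {s : Finset ι} {e : ι → α → ℝ}
    (he : ∀ k ∈ s, e k ∈ E.carrier) : ∑ k ∈ s, e k ∈ E.carrier :=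
  E.toSubmodule.sum_mem he

variable (E) in
protected theorem norm_zero : E.norm 0 = 0 := by
  simpa using E.norm_smul 0 0

protected theorem norm_neg (f : α → ℝ) : E.norm (-f) = E.norm f := by
  simpa using E.norm_smul (-1) f

protected theorem norm_sub_comm (f g : α → ℝ) : E.norm (f - g) = E.norm (g - f) := by
  rw [← neg_sub, E.norm_neg]

protected theorem norm_sum_le {ι : Type*} (s : Finset ι) {e : ι → α → ℝ}
    (he : ∀ k ∈ s, e k ∈ E.carrier) : E.norm (∑ k ∈ s, e k) ≤ ∑ k ∈ s, E.norm (e k) := by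
  classical
  induction s using Finset.induction_on with
  | empty => simp [E.norm_zero]
  | insert i s hi ih =>
    rw [sum_insert hi, sum_insert hi]
    have he' : ∀ k ∈ s, e k ∈ E.carrier := fun k hk => he k (mem_insert_of_mem hk)
    calc E.norm (e i + ∑ k ∈ s, e k) ≤ E.norm (e i) + E.norm (∑ k ∈ s, e k) :=
          E.norm_add _ _ (he i (mem_insert_self i s)) (IdealSpace.sum_mem he')
      _ ≤ _ := by gcongr; exact ih he'

theorem abs_mem_iff {f : α → ℝ} : (fun a => |f a|) ∈ E.carrier ↔ f ∈ E.carrier :=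
  ⟨fun h => E.ideal_mem h (by simp), fun h => E.ideal_mem h (by simp)⟩

theorem norm_abs {f : α → ℝ} (hf : f ∈ E.carrier) : E.norm (fun a => |f a|) = E.norm f :=
  le_antisymm (E.ideal_norm hf (by simp)) (E.ideal_norm (abs_mem_iff.2 hf) (by simp))

theorem inv_smul_mem_unitBall {f : α → ℝ} (hf : f ∈ E.carrier) {c : ℝ} (hc : 0 < c)
    (hfc : E.norm f ≤ c) : c⁻¹ • f ∈ E.unitBall := by
  refine ⟨E.smul_mem _ hf, ?_⟩
  rw [E.norm_smul, abs_inv, abs_of_pos hc]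
  exact inv_mul_le_one_of_le₀ hfc hc.le

theorem exists_pos_mem_unitBall : ∃ u ∈ E.unitBall, 0 ≤ u ∧ ∀ᵐ a ∂μ, 0 < u a := by
  obtain ⟨w, hw, hwpos⟩ := E.weak_unit
  have hc : 0 < max 1 (E.norm w) := lt_max_of_lt_left one_pos
  refine ⟨(max 1 (E.norm w))⁻¹ • fun a => |w a|,
    inv_smul_mem_unitBall (abs_mem_iff.2 hw) hc ((norm_abs hw).trans_le (le_max_right _ _)),
    fun a => mul_nonneg (inv_nonneg.2 hc.le) (abs_nonneg (w a)), ?_⟩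
  filter_upwards [hwpos] with a ha
  simpa using ha.ne'

theorem mem_of_abs_le {f g : α → ℝ} (hg : g ∈ E.carrier) (h : ∀ a, |f a| ≤ g a) :
    f ∈ E.carrier :=
  E.ideal_mem hg (Eventually.of_forall fun a => (h a).trans (le_abs_self _))

theorem ae_le_of_monotone_of_tendsto {s : ℕ → α → ℝ} {f : α → ℝ}
    (hs : ∀ n, s n ∈ E.carrier) (hf : f ∈ E.carrier) (hmono : Monotone s)
    (hlim : Tendsto (fun n => E.norm (s n - f)) atTop (𝓝 0)) (n : ℕ) :
    ∀ᵐ a ∂μ, s n a ≤ f a := by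
  set p : α → ℝ := fun a => max (s n a - f a) 0
  have hdom : ∀ m ≥ n, ∀ a, |p a| ≤ |(s m - f) a| := fun m hm a => by
    rw [abs_of_nonneg (le_max_right _ _)]
    exact max_le ((sub_le_sub_right (hmono hm a) _).trans (le_abs_self _)) (abs_nonneg _)
  have hp : p ∈ E.carrier := mem_of_abs_le (abs_mem_iff.2 (E.sub_mem (hs n) hf)) (hdom n le_rfl)
  have hp0 : E.norm p = 0 := le_antisymm
    (ge_of_tendsto hlim (eventually_atTop.2 ⟨n, fun m hm =>
      E.ideal_norm (E.sub_mem (hs m) hf) (Eventually.of_forall (hdom m hm))⟩))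
    (E.norm_nonneg p)
  filter_upwards [(E.norm_eq_zero p hp).1 hp0] with a ha
  simpa [p] using ha

theorem norm_partialSum_sub_le {b : ℕ → α → ℝ} (hb : ∀ n, b n ∈ E.carrier) (m n : ℕ) :
    E.norm (∑ k ∈ range m, b k - ∑ k ∈ range n, b k) ≤
      dist (∑ k ∈ range m, E.norm (b k)) (∑ k ∈ range n, E.norm (b k)) := by
  wlog hnm : n ≤ m generalizing m n
  · rw [E.norm_sub_comm, dist_comm]
    exact this n m (le_of_not_ge hnm)
  rw [Real.dist_eq, ← sum_Ico_eq_sub _ hnm, ← sum_Ico_eq_sub _ hnm]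
  exact (E.norm_sum_le _ fun k _ => hb k).trans (le_abs_self _)

theorem exists_ae_sum_le_of_summable {b : ℕ → α → ℝ} (hb : ∀ n, b n ∈ E.carrier)
    (hb0 : ∀ n, 0 ≤ b n) (hsum : Summable fun n => E.norm (b n)) :
    ∃ W ∈ E.carrier, ∀ N, ∀ᵐ a ∂μ, ∑ k ∈ range N, b k a ≤ W a := by
  obtain ⟨W, hW, hlim⟩ := E.complete (fun N => ∑ k ∈ range N, b k)
    (fun N => IdealSpace.sum_mem fun k _ => hb k) fun ε hε => by
      obtain ⟨N, hN⟩ := Metric.cauchySeq_iff.1 hsum.hasSum.tendsto_sum_nat.cauchySeq ε hε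
      exact ⟨N, fun m hm n hn => (norm_partialSum_sub_le hb m n).trans_lt (hN m hm n hn)⟩
  refine ⟨W, hW, fun N => ?_⟩
  simpa using ae_le_of_monotone_of_tendsto (fun N => IdealSpace.sum_mem fun k _ => hb k) hW
    (fun m n hmn => sum_le_sum_of_subset_of_nonneg (range_subset_range.2 hmn)
      fun k _ _ => hb0 k) hlim N

theorem exists_geom_majorant {w : ℕ → α → ℝ} (hw : ∀ j, w j ∈ E.unitBall) :
    ∃ W ∈ E.carrier, 0 ≤ W ∧ ∀ j, ∀ᵐ a ∂μ, |w j a| ≤ 2 ^ j * W a := by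
  set b : ℕ → α → ℝ := fun j => ((2:ℝ) ^ j)⁻¹ • fun a => |w j a|
  have hb : ∀ j, b j ∈ E.carrier := fun j => E.smul_mem _ (abs_mem_iff.2 (hw j).1)
  have hb0 : ∀ j, 0 ≤ b j := fun j a => mul_nonneg (by positivity) (abs_nonneg _)
  have hbnorm : ∀ j, E.norm (b j) ≤ 2⁻¹ ^ j := fun j => by
    rw [E.norm_smul, norm_abs (hw j).1, inv_pow, abs_of_pos (by positivity)]
    exact mul_le_of_le_one_right (by positivity) (hw j).2
  obtain ⟨W, hW, hWle⟩ := exists_ae_sum_le_of_summable hb hb0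
    (Summable.of_nonneg_of_le (fun j => E.norm_nonneg _) hbnorm
      (summable_geometric_of_lt_one (by norm_num) (by norm_num)))
  refine ⟨fun a => |W a|, abs_mem_iff.2 hW, fun a => abs_nonneg _, fun j => ?_⟩
  filter_upwards [hWle (j + 1)] with a ha
  have hj : b j a ≤ ∑ k ∈ range (j + 1), b k a :=
    single_le_sum (f := fun k => b k a) (fun k _ => hb0 k a) (self_mem_range_succ j)
  have hw : |w j a| = 2 ^ j * b j a := by
    simp [b]
  rw [hw]
  exact mul_le_mul_of_nonneg_left (hj.trans (ha.trans (le_abs_self _))) (by positivity)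

theorem ae_eventually_le_pow_mul {f : ℕ → α → ℝ} (hf : ∀ n, f n ∈ E.unitBall) {u : α → ℝ}
    (hu : 0 ≤ u) {r : ℝ} (hr : 1 < r) :
    ∀ᵐ a ∂μ, 0 < u a → ∀ᶠ n in atTop, f n a ≤ r ^ n * u a := by
  have hr0 : 0 < r := one_pos.trans hr
  -- `b n ≤ r⁻ⁿ f n`, so `∑ b n` has a majorant in `E`; where `u a > 0`, only finitely many
  -- `b n a` can then be nonzero
  set b : ℕ → α → ℝ := fun n a => if r ^ n * u a < f n a then u a else 0
  have hdom : ∀ n a, |b n a| ≤ |((r ^ n)⁻¹ • f n) a| := fun n a => by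
    simp only [b, Pi.smul_apply, smul_eq_mul]
    split_ifs with h
    · have hfpos : 0 < f n a := (mul_nonneg (by positivity) (hu a)).trans_lt h
      rw [abs_of_nonneg (hu a), abs_of_pos (by positivity : 0 < (r ^ n)⁻¹ * f n a)]
      rw [le_inv_mul_iff₀ (by positivity)]
      exact h.le
    · simp only [abs_zero]
      positivity
  have hb : ∀ n, b n ∈ E.carrier := fun n =>
    E.ideal_mem (E.smul_mem _ (hf n).1) (Eventually.of_forall (hdom n))
  have hbnorm : ∀ n, E.norm (b n) ≤ r⁻¹ ^ n := fun n => by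
    refine (E.ideal_norm (E.smul_mem _ (hf n).1) (Eventually.of_forall (hdom n))).trans ?_
    rw [E.norm_smul, abs_of_pos (by positivity), inv_pow]
    exact mul_le_of_le_one_right (by positivity) (hf n).2
  have hb0 : ∀ n, 0 ≤ b n := fun n a => by
    simp only [b]; split_ifs; exacts [hu a, le_rfl]
  obtain ⟨W, -, hW⟩ := exists_ae_sum_le_of_summable hb hb0
    (Summable.of_nonneg_of_le (fun n => E.norm_nonneg _) hbnorm
      (summable_geometric_of_lt_one (by positivity) (inv_lt_one_of_one_lt₀ hr)))
  filter_upwards [ae_all_iff.2 hW] with a ha hua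
  have hlim := (summable_of_sum_range_le (fun n => hb0 n a) ha).tendsto_atTop_zero
  filter_upwards [hlim.eventually (gt_mem_nhds hua)] with n hn
  by_contra h
  simp only [b, if_pos (not_le.1 h)] at hn
  exact lt_irrefl _ hn

end IdealSpace

namespace HasFatou

theorem mem_of_eventually_eq (hE : HasFatou E) {φ : ℕ → α → ℝ} {f : α → ℝ} {M : ℝ}
    (hφ : ∀ n, φ n ∈ E.carrier) (hφM : ∀ n, E.norm (φ n) ≤ M)
    (hmono : ∀ᵐ a ∂μ, ∀ n, 0 ≤ φ n a ∧ φ n a ≤ φ (n + 1) a)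
    (hlim : ∀ᵐ a ∂μ, ∀ᶠ n in atTop, φ n a = f a) :
    f ∈ E.carrier ∧ E.norm f ≤ M := by
  obtain ⟨hf, hnorm⟩ := hE φ f hφ hmono
    (by filter_upwards [hlim] with a ha using tendsto_const_nhds.congr' (EventuallyEq.symm ha))
    ⟨M, hφM⟩
  exact ⟨hf, le_of_tendsto' hnorm hφM⟩

theorem mem_of_norm_min_le (hE : HasFatou E) {u : α → ℝ} (hu : u ∈ E.carrier) (hu0 : 0 ≤ u)
    (hupos : ∀ᵐ a ∂μ, 0 < u a) {φ : α → ℝ} (hφ : 0 ≤ φ) {M : ℝ}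
    (hM : ∀ n : ℕ, E.norm (fun a => min (φ a) (n * u a)) ≤ M) :
    φ ∈ E.carrier ∧ E.norm φ ≤ M := by
  have hnu : ∀ (n : ℕ) a, 0 ≤ n * u a := fun n a => mul_nonneg n.cast_nonneg (hu0 a)
  refine hE.mem_of_eventually_eq (fun n => E.mem_of_abs_le (E.smul_mem (n : ℝ) hu) fun a => ?_)
    hM (Eventually.of_forall fun a n => ⟨le_min (hφ a) (hnu n a), ?_⟩) ?_
  · rw [abs_of_nonneg (le_min (hφ a) (hnu n a))]
    exact min_le_right _ _
  · gcongr
    · exact hu0 a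
    · linarith
  · filter_upwards [hupos] with a ha
    obtain ⟨N, hN⟩ := exists_nat_ge (φ a / u a)
    filter_upwards [eventually_ge_atTop N] with n hn
    exact min_eq_left ((div_le_iff₀ ha).1 (hN.trans (by exact_mod_cast hn)))

end HasFatou

theorem exists_abs_le_abs_mul_eq_min {ι : Type*} (x g : ι → ℝ) {c : ι → ℝ} (hc : 0 ≤ c) :
    ∃ g' : ι → ℝ, (∀ a, |g' a| ≤ |g a|) ∧ ∀ a, |x a * g' a| = min |x a * g a| (c a) := by
  -- where `x a * g a = 0` the junk value `c a / 0 = 0` makes `g' a = 0`, as required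
  refine ⟨fun a => g a * min 1 (c a / |x a * g a|), fun a => ?_, fun a => ?_⟩
  · rw [abs_mul, abs_of_nonneg (le_min zero_le_one (div_nonneg (hc a) (abs_nonneg _)))]
    exact mul_le_of_le_one_right (abs_nonneg _) (min_le_left _ _)
  · rw [← mul_assoc, abs_mul, abs_of_nonneg (le_min zero_le_one (div_nonneg (hc a) (abs_nonneg _))),
      mul_min_of_nonneg _ _ (abs_nonneg _), mul_one]
    rcases (abs_nonneg (x a * g a)).eq_or_lt with h | h
    · simpa [← h] using hc a
    · rw [mul_div_cancel₀ _ h.ne']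

theorem HasFatou.mul_mem_of_norm_mul_le (hE : HasFatou E) {x : α → ℝ}
    {M : ℝ} (hM : ∀ g ∈ G.unitBall, x * g ∈ E.carrier → E.norm (x * g) ≤ M)
    {g : α → ℝ} (hg : g ∈ G.unitBall) : x * g ∈ E.carrier ∧ E.norm (x * g) ≤ M := by
  obtain ⟨u, ⟨hu, -⟩, hu0, hupos⟩ := E.exists_pos_mem_unitBall
  have htrunc : ∀ n : ℕ, E.norm (fun a => min |x a * g a| (n * u a)) ≤ M := fun n => by
    obtain ⟨g', hg'g, hg'⟩ :=
      exists_abs_le_abs_mul_eq_min x g (fun a => mul_nonneg n.cast_nonneg (hu0 a))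
    have hdom : ∀ᵐ a ∂μ, |g' a| ≤ |g a| := Eventually.of_forall hg'g
    have hxg' : x * g' ∈ E.carrier := E.mem_of_abs_le (E.smul_mem (n : ℝ) hu) fun a => by
      simp [hg']
    rw [← funext hg']
    exact (E.norm_abs hxg').trans_le
      (hM g' ⟨G.ideal_mem hg.1 hdom, (G.ideal_norm hg.1 hdom).trans hg.2⟩ hxg')
  obtain ⟨hmem, hnorm⟩ := hE.mem_of_norm_min_le hu hu0 hupos (fun a => abs_nonneg _) htrunc
  have hxg := E.abs_mem_iff.1 hmem
  exact ⟨hxg, (E.norm_abs hxg).symm.trans_le hnorm⟩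

section Calderon

variable {θ : ℝ}

def caldAdmissible (θ : ℝ) (X Y : IdealSpace μ) (z : α → ℝ) : Set ℝ :=
  {lam | 0 < lam ∧ ∃ x ∈ X.carrier, ∃ y ∈ Y.carrier, X.norm x ≤ 1 ∧ Y.norm y ≤ 1 ∧
      ∀ᵐ a ∂μ, |z a| ≤ lam * |x a| ^ θ * |y a| ^ (1 - θ)}

theorem mem_caldSet_iff {z : α → ℝ} : z ∈ caldSet θ E F ↔ (caldAdmissible θ E F z).Nonempty :=
  Iff.rfl

theorem caldNorm_eq_sInf (z : α → ℝ) : caldNorm θ E F z = sInf (caldAdmissible θ E F z) := rfl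

theorem caldNorm_le {z : α → ℝ} {lam : ℝ} (h : lam ∈ caldAdmissible θ E F z) :
    caldNorm θ E F z ≤ lam :=
  csInf_le ⟨0, fun _ h => h.1.le⟩ h

theorem exists_mem_caldAdmissible_lt {z : α → ℝ} (hz : z ∈ caldSet θ E F) {c : ℝ}
    (hc : caldNorm θ E F z < c) : ∃ lam ∈ caldAdmissible θ E F z, lam < c :=
  (csInf_lt_iff ⟨0, fun _ h => h.1.le⟩ hz).1 hc

theorem mul_mem_caldAdmissible_of_le {z w : α → ℝ} {lam c : ℝ}
    (hw : lam ∈ caldAdmissible θ E F w) (hc : 0 < c) (hzw : ∀ᵐ a ∂μ, |z a| ≤ c * |w a|) :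
    c * lam ∈ caldAdmissible θ E F z := by
  obtain ⟨hlam, x, hx, y, hy, hxn, hyn, hw⟩ := hw
  refine ⟨mul_pos hc hlam, x, hx, y, hy, hxn, hyn, ?_⟩
  filter_upwards [hzw, hw] with a h1 h2
  calc |z a| ≤ c * |w a| := h1
    _ ≤ c * (lam * |x a| ^ θ * |y a| ^ (1 - θ)) := by gcongr
    _ = _ := by ring

theorem mem_caldAdmissible_of_le {z : α → ℝ} {x y : α → ℝ} (hx : x ∈ E.carrier)
    (hy : y ∈ F.carrier) {lam mx my : ℝ} (hlam : 0 < lam) (hmx : 0 < mx) (hxm : E.norm x ≤ mx)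
    (hmy : 0 < my) (hym : F.norm y ≤ my)
    (hz : ∀ᵐ a ∂μ, |z a| ≤ lam * |x a| ^ θ * |y a| ^ (1 - θ)) :
    lam * mx ^ θ * my ^ (1 - θ) ∈ caldAdmissible θ E F z := by
  obtain ⟨hx', hxn⟩ := E.inv_smul_mem_unitBall hx hmx hxm
  obtain ⟨hy', hyn⟩ := F.inv_smul_mem_unitBall hy hmy hym
  refine ⟨by positivity, _, hx', _, hy', hxn, hyn, ?_⟩
  filter_upwards [hz] with a ha
  have hscale : ∀ (m t p : ℝ), 0 < m → m ^ p * |m⁻¹ * t| ^ p = |t| ^ p :=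
    fun m t p hm => by
      rw [abs_mul, abs_inv, abs_of_pos hm, Real.mul_rpow (inv_nonneg.2 hm.le) (abs_nonneg _),
        ← mul_assoc, Real.inv_rpow hm.le, mul_inv_cancel₀ (by positivity), one_mul]
  calc |z a| ≤ lam * |x a| ^ θ * |y a| ^ (1 - θ) := ha
    _ = lam * (mx ^ θ * |mx⁻¹ * x a| ^ θ) * (my ^ (1 - θ) * |my⁻¹ * y a| ^ (1 - θ)) := by
      rw [hscale mx (x a) θ hmx, hscale my (y a) (1 - θ) hmy]
    _ = _ := by simp only [Pi.smul_apply, smul_eq_mul]; ring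

theorem caldAdmissible_zero : caldAdmissible θ E F 0 = Set.Ioi 0 := by
  ext lam
  refine ⟨fun h => h.1, fun h => ⟨h, 0, E.zero_mem, 0, F.zero_mem, ?_, ?_, ?_⟩⟩
  · rw [E.norm_zero]; exact zero_le_one
  · rw [F.norm_zero]; exact zero_le_one
  · have : 0 < lam := h
    exact Eventually.of_forall fun a => by simp only [Pi.zero_apply, abs_zero]; positivity

theorem zero_mem_caldSet : (0 : α → ℝ) ∈ caldSet θ E F := by
  rw [mem_caldSet_iff, caldAdmissible_zero]
  exact Set.nonempty_Ioi

theorem caldNorm_zero : caldNorm θ E F (0 : α → ℝ) = 0 := by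
  rw [caldNorm_eq_sInf, caldAdmissible_zero, csInf_Ioi]

end Calderon

theorem le_rpow_of_forall_gt {y D p : ℝ} (hp : 0 ≤ p) (h : ∀ c, D < c → y ≤ c ^ p) :
    y ≤ D ^ p :=
  ge_of_tendsto (Real.continuousAt_rpow_const D p (Or.inr hp)).continuousWithinAt
    (eventually_nhdsWithin_of_forall (s := Set.Ioi D) h)

section Multiplier

variable {θ : ℝ}

def multNormSet {ι : Type*} (S : Set (ι → ℝ)) (NS NT : (ι → ℝ) → ℝ) (x : ι → ℝ) : Set ℝ :=
  {r | ∃ y ∈ S, NS y ≤ 1 ∧ r = NT (x * y)}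

theorem multNorm_eq_sSup {ι : Type*} (S : Set (ι → ℝ)) (NS NT : (ι → ℝ) → ℝ) (x : ι → ℝ) :
    multNorm S NS NT x = sSup (multNormSet S NS NT x) := rfl

theorem mem_upperBounds_multNormSet {ι : Type*} {S : Set (ι → ℝ)} {NS NT : (ι → ℝ) → ℝ}
    {x : ι → ℝ} {M : ℝ} :
    M ∈ upperBounds (multNormSet S NS NT x) ↔ ∀ y ∈ S, NS y ≤ 1 → NT (x * y) ≤ M :=
  ⟨fun h y hy hyn => h ⟨y, hy, hyn, rfl⟩, by rintro h _ ⟨y, hy, hyn, rfl⟩; exact h y hy hyn⟩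

theorem zero_mem_multNormSet {ι : Type*} {S : Set (ι → ℝ)} {NS NT : (ι → ℝ) → ℝ} (x : ι → ℝ)
    (hS : 0 ∈ S) (hNS : NS 0 ≤ 1) (hNT : NT 0 = 0) : (0 : ℝ) ∈ multNormSet S NS NT x :=
  ⟨0, hS, hNS, by rw [mul_zero, hNT]⟩

theorem mem_multSet_of_forall_unitBall {x : α → ℝ}
    (h : ∀ g ∈ G.unitBall, x * g ∈ E.carrier) : x ∈ multSet G.carrier E.carrier := by
  intro g hg
  have hc : 0 < max 1 (G.norm g) := lt_max_of_lt_left one_pos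
  have := E.smul_mem (max 1 (G.norm g)) (h _ (G.inv_smul_mem_unitBall hg hc (le_max_right _ _)))
  rwa [mul_smul_comm, smul_inv_smul₀ hc.ne'] at this

theorem caldNorm_le_mul_caldNorm {X Y : IdealSpace μ} {z w : α → ℝ} (hz : z ∈ caldSet θ X Y)
    {c : ℝ} (hc : 0 < c)
    (h : ∀ lam ∈ caldAdmissible θ X Y z, c * lam ∈ caldAdmissible θ E F w) :
    caldNorm θ E F w ≤ c * caldNorm θ X Y z :=
  (div_le_iff₀' hc).1 <| le_csInf hz fun lam hlam => (div_le_iff₀' hc).2 (caldNorm_le (h lam hlam))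

theorem rpow_abs_mul_mem_caldAdmissible {x g f z : α → ℝ} {lam m : ℝ}
    (hxg : x * g ∈ E.carrier) (hm : 0 < m) (hxgm : E.norm (x * g) ≤ m) (hf : f ∈ F.unitBall)
    (hlam : 0 < lam) (hz : ∀ᵐ a ∂μ, |z a| ≤ lam * |g a| ^ θ * |f a| ^ (1 - θ)) :
    lam * m ^ θ ∈ caldAdmissible θ E F ((fun a => |x a| ^ θ) * z) := by
  have hle : ∀ᵐ a ∂μ, |((fun a => |x a| ^ θ) * z) a| ≤
      lam * |(x * g) a| ^ θ * |f a| ^ (1 - θ) := by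
    filter_upwards [hz] with a ha
    rw [Pi.mul_apply, abs_mul, abs_of_nonneg (by positivity), Pi.mul_apply, abs_mul,
      Real.mul_rpow (abs_nonneg _) (abs_nonneg _)]
    calc |x a| ^ θ * |z a| ≤ |x a| ^ θ * (lam * |g a| ^ θ * |f a| ^ (1 - θ)) := by gcongr
      _ = _ := by ring
  have h := mem_caldAdmissible_of_le hxg hf.1 hlam hm hxgm one_pos hf.2 hle
  rwa [Real.one_rpow, mul_one] at h

theorem rpow_abs_mem_multSet_caldSet {x : α → ℝ} (hx : x ∈ multSet G.carrier E.carrier) :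
    (fun a => |x a| ^ θ) ∈ multSet (caldSet θ G F) (caldSet θ E F) := by
  rintro z ⟨lam, hlam, g, hg, f, hf, -, hfn, hz⟩
  exact ⟨_, rpow_abs_mul_mem_caldAdmissible (hx g hg) (lt_max_of_lt_left one_pos)
    (le_max_right 1 _) ⟨hf, hfn⟩ hlam hz⟩

theorem caldNorm_rpow_abs_mul_le (hθ : 0 ≤ θ) {x : α → ℝ} {M : ℝ} (hM0 : 0 ≤ M)
    (hM : ∀ g ∈ G.unitBall, x * g ∈ E.carrier ∧ E.norm (x * g) ≤ M) {z : α → ℝ}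
    (hz : z ∈ caldSet θ G F) (hzn : caldNorm θ G F z ≤ 1) :
    caldNorm θ E F ((fun a => |x a| ^ θ) * z) ≤ M ^ θ := by
  refine le_rpow_of_forall_gt hθ fun c hc => ?_
  have hc0 : 0 < c := hM0.trans_lt hc
  calc caldNorm θ E F ((fun a => |x a| ^ θ) * z) ≤ c ^ θ * caldNorm θ G F z := by
        refine caldNorm_le_mul_caldNorm hz (by positivity) ?_
        rintro lam ⟨hlam, g, hg, f, hf, hgn, hfn, hle⟩
        rw [mul_comm (c ^ θ)]
        exact rpow_abs_mul_mem_caldAdmissible (hM g ⟨hg, hgn⟩).1 hc0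
          ((hM g ⟨hg, hgn⟩).2.trans hc.le) ⟨hf, hfn⟩ hlam hle
    _ ≤ c ^ θ := mul_le_of_le_one_right (by positivity) hzn

theorem exists_caldSet_geom_majorant (hθ0 : 0 ≤ θ) (hθ1 : θ ≤ 1) {z : ℕ → α → ℝ}
    (hz : ∀ j, z j ∈ caldSet θ E F) (hzn : ∀ j, caldNorm θ E F (z j) ≤ 1) :
    ∃ Z ∈ caldSet θ E F, ∀ j, ∀ᵐ a ∂μ, |z j a| ≤ 2 ^ (j + 1) * |Z a| := by
  have hwit : ∀ j, ∃ g ∈ E.unitBall, ∃ f ∈ F.unitBall,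
      ∀ᵐ a ∂μ, |z j a| ≤ 2 * |g a| ^ θ * |f a| ^ (1 - θ) := fun j => by
    obtain ⟨lam, ⟨-, g, hg, f, hf, hgn, hfn, hle⟩, hlam⟩ :=
      exists_mem_caldAdmissible_lt (hz j) ((hzn j).trans_lt one_lt_two)
    refine ⟨g, ⟨hg, hgn⟩, f, ⟨hf, hfn⟩, ?_⟩
    filter_upwards [hle] with a ha
    exact ha.trans (by gcongr)
  choose g hg f hf hgf using hwit
  obtain ⟨U, hU, hU0, hgU⟩ := E.exists_geom_majorant hg
  obtain ⟨V, hV, hV0, hfV⟩ := F.exists_geom_majorant hf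
  refine ⟨fun a => U a ^ θ * V a ^ (1 - θ), ⟨_, mem_caldAdmissible_of_le hU hV one_pos
    (lt_max_of_lt_left one_pos) (le_max_right 1 _) (lt_max_of_lt_left one_pos)
    (le_max_right 1 _) (Eventually.of_forall fun a => ?_)⟩, fun j => ?_⟩
  · have hU0a : 0 ≤ U a := hU0 a
    have hV0a : 0 ≤ V a := hV0 a
    rw [abs_of_nonneg hU0a, abs_of_nonneg hV0a, one_mul, abs_of_nonneg (by positivity)]
  · filter_upwards [hgf j, hgU j, hfV j] with a h1 h2 h3
    have hU0a : 0 ≤ U a := hU0 a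
    have hV0a : 0 ≤ V a := hV0 a
    rw [abs_of_nonneg (show 0 ≤ U a ^ θ * V a ^ (1 - θ) by positivity)]
    calc |z j a| ≤ 2 * |g j a| ^ θ * |f j a| ^ (1 - θ) := h1
      _ ≤ 2 * (2 ^ j * U a) ^ θ * (2 ^ j * V a) ^ (1 - θ) := by
        gcongr
      _ = 2 * ((2 ^ j) ^ θ * (2 ^ j) ^ (1 - θ)) * (U a ^ θ * V a ^ (1 - θ)) := by
        rw [Real.mul_rpow (by positivity) hU0a, Real.mul_rpow (by positivity) hV0a]; ring
      _ = 2 ^ (j + 1) * (U a ^ θ * V a ^ (1 - θ)) := by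
        rw [← Real.rpow_add (by positivity), add_sub_cancel, Real.rpow_one, pow_succ]; ring

theorem bddAbove_multNormSet_caldSet (hθ0 : 0 ≤ θ) (hθ1 : θ ≤ 1) {m : α → ℝ}
    (hm : m ∈ multSet (caldSet θ G F) (caldSet θ E F)) :
    BddAbove (multNormSet (caldSet θ G F) (caldNorm θ G F) (caldNorm θ E F) m) := by
  by_contra hunb
  have hbig : ∀ j : ℕ, ∃ z ∈ caldSet θ G F, caldNorm θ G F z ≤ 1 ∧
      j * 2 ^ (j + 1) < caldNorm θ E F (m * z) := fun j => by
    obtain ⟨_, ⟨z, hz, hzn, rfl⟩, hlt⟩ := not_bddAbove_iff.1 hunb (j * 2 ^ (j + 1))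
    exact ⟨z, hz, hzn, hlt⟩
  choose z hz hzn hlt using hbig
  obtain ⟨Z, hZ, hzZ⟩ := exists_caldSet_geom_majorant hθ0 hθ1 hz hzn
  obtain ⟨lam, hlam⟩ := hm Z hZ
  obtain ⟨j, hj⟩ := exists_nat_gt lam
  have hle : caldNorm θ E F (m * z j) ≤ 2 ^ (j + 1) * lam := by
    refine caldNorm_le (mul_mem_caldAdmissible_of_le hlam (by positivity) ?_)
    filter_upwards [hzZ j] with a ha
    simp only [Pi.mul_apply, abs_mul]
    rw [mul_left_comm]
    gcongr
  have := (hlt j).trans_le hle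
  rw [mul_comm] at this
  exact hj.not_gt (lt_of_mul_lt_mul_left this (by positivity))

end Multiplier

theorem exists_seq_of_forall_exists {γ δ : Type*} {P : γ → Prop} {R : γ → δ → γ → Prop}
    {x₀ : γ} (h₀ : P x₀) (h : ∀ x, P x → ∃ y x', P x' ∧ R x y x') :
    ∃ (x : ℕ → γ) (y : ℕ → δ), x 0 = x₀ ∧ ∀ n, P (x n) ∧ R (x n) (y n) (x (n + 1)) := by
  choose y x' hP hR using h
  let X : ℕ → {x // P x} := fun n => Nat.rec ⟨x₀, h₀⟩ (fun _ p => ⟨x' p.1 p.2, hP p.1 p.2⟩) n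
  exact ⟨fun n => (X n).1, fun n => y (X n).1 (X n).2, rfl, fun n => ⟨(X n).2, hR _ _⟩⟩

theorem prod_le_average_pow {ι : Type*} (s : Finset ι) {e : ι → ℝ} (he : ∀ i ∈ s, 0 ≤ e i) :
    ∏ i ∈ s, e i ≤ ((#s : ℝ)⁻¹ * ∑ i ∈ s, e i) ^ #s := by
  rcases s.eq_empty_or_nonempty with rfl | hs
  · simp
  have hamgm := Real.geom_mean_le_arith_mean s (fun _ => 1) e (fun _ _ => zero_le_one)
    (by simpa using hs) he
  simp only [Real.rpow_one, sum_const, nsmul_eq_mul, mul_one, one_mul] at hamgm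
  calc ∏ i ∈ s, e i = ((∏ i ∈ s, e i) ^ (#s : ℝ)⁻¹) ^ #s := by
        rw [← Real.rpow_natCast, ← Real.rpow_mul (prod_nonneg he),
          inv_mul_cancel₀ (by simpa using hs.ne_empty), Real.rpow_one]
    _ ≤ ((#s : ℝ)⁻¹ * ∑ i ∈ s, e i) ^ #s := by
        rw [inv_mul_eq_div]
        exact pow_le_pow_left₀ (by positivity [prod_nonneg he]) hamgm _

section Iteration

variable {β D H : ℝ} {f e : ℕ → ℝ}

theorem pow_rpow_mul_le_of_step (hH : 0 ≤ H) (hD : 0 ≤ D) (he : ∀ k, 0 ≤ e k)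
    (hstep : ∀ k, H ^ β * f k ^ (1 - β) ≤ D * (e k ^ β * f (k + 1) ^ (1 - β))) (n : ℕ) :
    (H ^ β) ^ n * f 0 ^ (1 - β) ≤ D ^ n * (∏ k ∈ range n, e k) ^ β * f n ^ (1 - β) := by
  induction n with
  | zero => simp
  | succ n ih =>
    have hprod : 0 ≤ ∏ k ∈ range n, e k := prod_nonneg fun k _ => he k
    calc (H ^ β) ^ (n + 1) * f 0 ^ (1 - β) = H ^ β * ((H ^ β) ^ n * f 0 ^ (1 - β)) := by ring
      _ ≤ H ^ β * (D ^ n * (∏ k ∈ range n, e k) ^ β * f n ^ (1 - β)) :=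
        mul_le_mul_of_nonneg_left ih (by positivity)
      _ = D ^ n * (∏ k ∈ range n, e k) ^ β * (H ^ β * f n ^ (1 - β)) := by ring
      _ ≤ D ^ n * (∏ k ∈ range n, e k) ^ β * (D * (e n ^ β * f (n + 1) ^ (1 - β))) :=
        mul_le_mul_of_nonneg_left (hstep n) (by positivity)
      _ = D ^ (n + 1) * (∏ k ∈ range (n + 1), e k) ^ β * f (n + 1) ^ (1 - β) := by
        rw [prod_range_succ, Real.mul_rpow hprod (he n)]; ring

theorem le_mul_average_of_step (hβ0 : 0 < β) (hβ1 : β ≤ 1) (hH : 0 ≤ H) (hD : 0 ≤ D)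
    (he : ∀ k, 0 ≤ e k) (hf0 : 0 < f 0)
    (hstep : ∀ k, H ^ β * f k ^ (1 - β) ≤ D * (e k ^ β * f (k + 1) ^ (1 - β)))
    {r : ℝ} (hr : 0 ≤ r) {n : ℕ} (hn : n ≠ 0) (hfn : 0 ≤ f n) (hfr : f n ≤ r ^ n * f 0) :
    H ≤ (D * r ^ (1 - β)) ^ (1 / β) * ((n : ℝ)⁻¹ * ∑ k ∈ range n, e k) := by
  set A := (n : ℝ)⁻¹ * ∑ k ∈ range n, e k
  have hA : 0 ≤ A := mul_nonneg (by positivity) (sum_nonneg fun k _ => he k)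
  have hfr' : f n ^ (1 - β) ≤ (r ^ (1 - β)) ^ n * f 0 ^ (1 - β) := by
    rw [Real.rpow_pow_comm hr, ← Real.mul_rpow (by positivity) hf0.le]
    exact Real.rpow_le_rpow hfn hfr (by linarith)
  have hprod : (∏ k ∈ range n, e k) ^ β ≤ (A ^ β) ^ n := by
    rw [Real.rpow_pow_comm hA]
    refine Real.rpow_le_rpow (prod_nonneg fun k _ => he k) ?_ hβ0.le
    simpa [A] using prod_le_average_pow (range n) fun k _ => he k
  have hpow : (H ^ β) ^ n * f 0 ^ (1 - β) ≤ (D * r ^ (1 - β) * A ^ β) ^ n * f 0 ^ (1 - β) :=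
    calc (H ^ β) ^ n * f 0 ^ (1 - β)
        ≤ D ^ n * (∏ k ∈ range n, e k) ^ β * f n ^ (1 - β) :=
          pow_rpow_mul_le_of_step hH hD he hstep n
      _ ≤ D ^ n * (A ^ β) ^ n * ((r ^ (1 - β)) ^ n * f 0 ^ (1 - β)) := by
          gcongr
      _ = (D * r ^ (1 - β) * A ^ β) ^ n * f 0 ^ (1 - β) := by ring
  have hHβ : H ^ β ≤ D * r ^ (1 - β) * A ^ β :=
    (pow_le_pow_iff_left₀ (by positivity) (by positivity) hn).1
      (le_of_mul_le_mul_right hpow (by positivity))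
  calc H = (H ^ β) ^ (1 / β) := by rw [one_div, Real.rpow_rpow_inv hH hβ0.ne']
    _ ≤ (D * r ^ (1 - β) * A ^ β) ^ (1 / β) := Real.rpow_le_rpow (by positivity) hHβ (by positivity)
    _ = (D * r ^ (1 - β)) ^ (1 / β) * A := by
        rw [Real.mul_rpow (by positivity) (by positivity), one_div, Real.rpow_rpow_inv hA hβ0.ne']

end Iteration

theorem IdealSpace.average_mem_unitBall {ι : Type*} (s : Finset ι) {e : ι → α → ℝ}
    (he : ∀ i ∈ s, e i ∈ E.unitBall) : (#s : ℝ)⁻¹ • ∑ i ∈ s, e i ∈ E.unitBall := by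
  have hsum := IdealSpace.sum_mem fun i hi => (he i hi).1
  refine ⟨E.smul_mem _ hsum, ?_⟩
  rw [E.norm_smul, abs_of_nonneg (by positivity)]
  refine inv_mul_le_one_of_le₀ ((E.norm_sum_le s fun i hi => (he i hi).1).trans ?_)
    (by positivity)
  simpa using sum_le_sum fun i hi => (he i hi).2

def CaldDominated (E F : IdealSpace μ) (β D : ℝ) (h : α → ℝ) : Prop :=
  ∀ f ∈ F.unitBall, 0 ≤ f → ∃ e ∈ E.unitBall, 0 ≤ e ∧ ∃ f' ∈ F.unitBall, 0 ≤ f' ∧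
    ∀ᵐ a ∂μ, h a ^ β * f a ^ (1 - β) ≤ D * (e a ^ β * f' a ^ (1 - β))

theorem CaldDominated.exists_seq {β D : ℝ} {h : α → ℝ} (hdom : CaldDominated E F β D h)
    {f₀ : α → ℝ} (hf₀ : f₀ ∈ F.unitBall) (hf₀0 : 0 ≤ f₀) :
    ∃ f e : ℕ → α → ℝ, f 0 = f₀ ∧ ∀ n, (f n ∈ F.unitBall ∧ 0 ≤ f n) ∧
      (e n ∈ E.unitBall ∧ 0 ≤ e n) ∧
      ∀ᵐ a ∂μ, h a ^ β * f n a ^ (1 - β) ≤ D * (e n a ^ β * f (n + 1) a ^ (1 - β)) :=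
  exists_seq_of_forall_exists (P := fun f => f ∈ F.unitBall ∧ 0 ≤ f)
    (R := fun f e f' => (e ∈ E.unitBall ∧ 0 ≤ e) ∧
      ∀ᵐ a ∂μ, h a ^ β * f a ^ (1 - β) ≤ D * (e a ^ β * f' a ^ (1 - β)))
    ⟨hf₀, hf₀0⟩ fun f hf => by
    obtain ⟨e, he, he0, f', hf', hf'0, hineq⟩ := hdom f hf.1 hf.2
    exact ⟨e, f', ⟨hf', hf'0⟩, ⟨he, he0⟩, hineq⟩

namespace HasFatou

variable {β : ℝ}

theorem mem_of_forall_le_of_eventually (hE : HasFatou E) {h : α → ℝ} (hh : 0 ≤ h)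
    {P : ℕ → α → Prop} (hP : ∀ᵐ a ∂μ, ∀ᶠ n in atTop, P n a) {K : ℝ}
    (hK : ∀ N, ∃ w ∈ E.carrier, E.norm w ≤ K ∧ ∀ᵐ a ∂μ, (∀ n ≥ N, P n a) → h a ≤ w a) :
    h ∈ E.carrier ∧ E.norm h ≤ K := by
  classical
  choose w hw hwK hhw using hK
  set m : ℕ → α → ℝ := fun N a => if (∀ n ≥ N, P n a) then h a else 0
  have hdom : ∀ N, ∀ᵐ a ∂μ, |m N a| ≤ |w N a| := fun N => by
    filter_upwards [hhw N] with a ha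
    simp only [m]
    split_ifs with hN
    · rw [abs_of_nonneg (hh a)]
      exact (ha hN).trans (le_abs_self _)
    · simp
  refine hE.mem_of_eventually_eq (φ := m) (fun N => E.ideal_mem (hw N) (hdom N))
    (fun N => (E.ideal_norm (hw N) (hdom N)).trans (hwK N))
    (Eventually.of_forall fun a N => ?_) ?_
  · simp only [m]
    split_ifs with h1 h2 h2
    · exact ⟨hh a, le_rfl⟩
    · exact absurd (fun n hn => h1 n (N.le_succ.trans hn)) h2
    · exact ⟨le_rfl, hh a⟩
    · exact ⟨le_rfl, le_rfl⟩
  · filter_upwards [hP] with a ha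
    obtain ⟨N, hN⟩ := eventually_atTop.1 ha
    filter_upwards [eventually_ge_atTop N] with M hM
    simp only [m, if_pos fun n hn => hN n (hM.trans hn)]

theorem norm_le_of_caldDominated_of_one_lt (hE : HasFatou E) (hβ0 : 0 < β) (hβ1 : β ≤ 1)
    {h : α → ℝ} (hh : 0 ≤ h) {D : ℝ} (hD : 0 ≤ D) (hdom : CaldDominated E F β D h)
    {r : ℝ} (hr : 1 < r) : h ∈ E.carrier ∧ E.norm h ≤ (D * r ^ (1 - β)) ^ (1 / β) := by
  obtain ⟨f₀, hf₀, hf₀0, hf₀pos⟩ := F.exists_pos_mem_unitBall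
  obtain ⟨f, e, rfl, hfe⟩ := hdom.exists_seq hf₀ hf₀0
  have hgood : ∀ᵐ a ∂μ, 0 < f 0 a ∧
      (∀ n, h a ^ β * f n a ^ (1 - β) ≤ D * (e n a ^ β * f (n + 1) a ^ (1 - β))) ∧
      ∀ᶠ n in atTop, f n a ≤ r ^ n * f 0 a := by
    filter_upwards [hf₀pos, ae_all_iff.2 fun n => (hfe n).2.2,
      F.ae_eventually_le_pow_mul (fun n => (hfe n).1.1) hf₀0 hr] with a h1 h2 h3
    exact ⟨h1, h2, h3 h1⟩
  refine hE.mem_of_forall_le_of_eventually hh (hgood.mono fun a ha => ha.2.2) fun N => ?_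
  set A := (#(range (N + 1)) : ℝ)⁻¹ • ∑ k ∈ range (N + 1), e k
  have hA : A ∈ E.unitBall := E.average_mem_unitBall _ fun k _ => (hfe k).2.1.1
  refine ⟨(D * r ^ (1 - β)) ^ (1 / β) • A, E.smul_mem _ hA.1, ?_, ?_⟩
  · rw [E.norm_smul, abs_of_nonneg (by positivity)]
    exact mul_le_of_le_one_right (by positivity) hA.2
  · filter_upwards [hgood] with a ha hN
    obtain ⟨hpos, hstep, -⟩ := ha
    simp only [A, Pi.smul_apply, smul_eq_mul, Finset.sum_apply, card_range]
    exact le_mul_average_of_step hβ0 hβ1 (hh a) hD (fun k => (hfe k).2.1.2 a)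
      hpos hstep (by positivity) (Nat.succ_ne_zero N) ((hfe _).1.2 a) (hN (N + 1) N.le_succ)

theorem norm_le_of_caldDominated (hE : HasFatou E) (hβ0 : 0 < β) (hβ1 : β < 1)
    {h : α → ℝ} (hh : 0 ≤ h) {D : ℝ} (hD : 0 ≤ D) (hdom : ∀ D' > D, CaldDominated E F β D' h) :
    h ∈ E.carrier ∧ E.norm h ≤ D ^ (1 / β) := by
  have key := fun D' (hD' : D < D') r (hr : 1 < r) =>
    hE.norm_le_of_caldDominated_of_one_lt hβ0 hβ1.le hh (hD.trans hD'.le) (hdom D' hD') hr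
  refine ⟨(key (D + 1) (by linarith) 2 one_lt_two).1, le_rpow_of_forall_gt (by positivity) ?_⟩
  intro c hc
  obtain ⟨D', hDD', hD'c⟩ := exists_between hc
  have hD'0 : 0 < D' := hD.trans_lt hDD'
  have hr : 1 < (c / D') ^ (1 - β)⁻¹ :=
    Real.one_lt_rpow ((one_lt_div hD'0).2 hD'c) (inv_pos.2 (by linarith))
  have hD'r : D' * ((c / D') ^ (1 - β)⁻¹) ^ (1 - β) = c := by
    rw [Real.rpow_inv_rpow (div_nonneg (hD'0.trans hD'c).le hD'0.le) (by linarith),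
      mul_div_cancel₀ _ hD'0.ne']
  simpa [hD'r] using (key D' hDD' _ hr).2

end HasFatou

theorem HasFatou.mul_mem_of_caldNorm_rpow_abs_mul_le (hE : HasFatou E) {β : ℝ} (hβ0 : 0 < β)
    (hβ1 : β < 1) {x : α → ℝ} {D : ℝ} (hD : 0 ≤ D)
    (hx : ∀ z ∈ caldSet β G F, caldNorm β G F z ≤ 1 →
      caldNorm β E F ((fun a => |x a| ^ β) * z) ≤ D)
    {g : α → ℝ} (hg : g ∈ G.unitBall) : x * g ∈ E.carrier ∧ E.norm (x * g) ≤ D ^ (1 / β) := by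
  refine hE.mul_mem_of_norm_mul_le (fun g hg hxg => ?_) hg
  rw [← E.norm_abs hxg]
  refine (hE.norm_le_of_caldDominated (F := F) hβ0 hβ1 (fun a => abs_nonneg _) hD
    fun D' hD' f hf hf0 => ?_).2
  have hf0 : ∀ a, 0 ≤ f a := hf0
  set z : α → ℝ := fun a => |g a| ^ β * f a ^ (1 - β)
  have hz : 1 ∈ caldAdmissible β G F z := ⟨one_pos, g, hg.1, f, hf.1, hg.2, hf.2,
    Eventually.of_forall fun a => by
      rw [one_mul, abs_of_nonneg (hf0 a), abs_of_nonneg (by have := hf0 a; positivity)]⟩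
  have himg : ∀ a, ((fun a => |x a| ^ β) * z) a = |(x * g) a| ^ β * f a ^ (1 - β) := fun a => by
    simp only [z, Pi.mul_apply, abs_mul, Real.mul_rpow (abs_nonneg _) (abs_nonneg _), mul_assoc]
  have himg_mem : (fun a => |x a| ^ β) * z ∈ caldSet β E F :=
    ⟨_, mem_caldAdmissible_of_le hxg hf.1 one_pos (lt_max_of_lt_left one_pos) (le_max_right 1 _)
      one_pos hf.2 (Eventually.of_forall fun a => by
        rw [himg, one_mul, abs_of_nonneg (hf0 a), abs_of_nonneg (by have := hf0 a; positivity)])⟩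
  obtain ⟨lam, ⟨-, e, he, f', hf', hen, hf'n, hle⟩, hlam⟩ :=
    exists_mem_caldAdmissible_lt himg_mem ((hx z ⟨1, hz⟩ (caldNorm_le hz)).trans_lt hD')
  refine ⟨fun a => |e a|, ⟨IdealSpace.abs_mem_iff.2 he, (IdealSpace.norm_abs he).trans_le hen⟩,
    fun a => abs_nonneg _, fun a => |f' a|,
    ⟨IdealSpace.abs_mem_iff.2 hf', (IdealSpace.norm_abs hf').trans_le hf'n⟩,
    fun a => abs_nonneg _, ?_⟩
  filter_upwards [hle] with a ha
  rw [himg, abs_of_nonneg (by have := hf0 a; positivity)] at ha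
  calc |(x * g) a| ^ β * f a ^ (1 - β) ≤ lam * |e a| ^ β * |f' a| ^ (1 - β) := ha
    _ ≤ D' * (|e a| ^ β * |f' a| ^ (1 - β)) := by
      rw [mul_assoc]; gcongr

/-- If either set is unbounded, so is the other, and both sides are the junk value `0`. -/
theorem sSup_eq_rpow_sSup_of_upperBounds {A B : Set ℝ} {p : ℝ} (hp : 0 < p) (hA : 0 ∈ A)
    (hB : 0 ∈ B) (hAB : ∀ M, 0 ≤ M → M ∈ upperBounds A → M ^ p ∈ upperBounds B)
    (hBA : ∀ D, 0 ≤ D → D ∈ upperBounds B → D ^ (1 / p) ∈ upperBounds A) :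
    sSup A = sSup B ^ (1 / p) := by
  by_cases hBb : BddAbove B
  · have hD : 0 ≤ sSup B := le_csSup hBb hB
    have hAle := hBA _ hD fun b hb => le_csSup hBb hb
    have hAb : BddAbove A := ⟨_, hAle⟩
    have hM : 0 ≤ sSup A := le_csSup hAb hA
    have hBle : sSup B ≤ sSup A ^ p :=
      csSup_le ⟨0, hB⟩ (hAB _ hM fun a ha => le_csSup hAb ha)
    refine le_antisymm (csSup_le ⟨0, hA⟩ hAle) ?_
    calc sSup B ^ (1 / p) ≤ (sSup A ^ p) ^ (1 / p) := by gcongr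
      _ = sSup A := by rw [← Real.rpow_mul hM, mul_one_div_cancel hp.ne', Real.rpow_one]
  · have hAb : ¬BddAbove A := fun hAb =>
      hBb ⟨_, hAB _ (le_csSup hAb hA) fun a ha => le_csSup hAb ha⟩
    rw [Real.sSup_of_not_bddAbove hAb, Real.sSup_of_not_bddAbove hBb,
      Real.zero_rpow (by positivity)]

/-- Proposition 2: if E has the Fatou property and 0 < θ < 1, then
M(G, E) ≡ M(G^{1-θ}F^θ, E^{1-θ}F^θ)^{(1-θ)} isometrically. -/
theorem multiplier_calderon_identity (E F G : IdealSpace μ) (hE : HasFatou E)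
    (θ : ℝ) (hθ : 0 < θ) (hθ1 : θ < 1) (x : α → ℝ) :
    (x ∈ multSet G.carrier E.carrier ↔
      (fun a => |x a| ^ (1 - θ)) ∈ multSet (caldSet (1 - θ) G F) (caldSet (1 - θ) E F)) ∧
    multNorm G.carrier G.norm E.norm x =
      (multNorm (caldSet (1 - θ) G F) (caldNorm (1 - θ) G F) (caldNorm (1 - θ) E F)
        (fun a => |x a| ^ (1 - θ))) ^ (1 / (1 - θ)) := by
  have hβ0 : 0 < 1 - θ := by linarith
  have hβ1 : 1 - θ < 1 := by linarith
  set A := multNormSet G.carrier G.norm E.norm x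
  set B := multNormSet (caldSet (1 - θ) G F) (caldNorm (1 - θ) G F) (caldNorm (1 - θ) E F)
    (fun a => |x a| ^ (1 - θ))
  have hA : (0 : ℝ) ∈ A :=
    zero_mem_multNormSet x G.zero_mem ((G.norm_zero).trans_le zero_le_one) E.norm_zero
  have hB : (0 : ℝ) ∈ B :=
    zero_mem_multNormSet _ zero_mem_caldSet (caldNorm_zero.trans_le zero_le_one) caldNorm_zero
  have hBA : ∀ D, 0 ≤ D → D ∈ upperBounds B →
      ∀ g ∈ G.unitBall, x * g ∈ E.carrier ∧ E.norm (x * g) ≤ D ^ (1 / (1 - θ)) :=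
    fun D hD hDB g hg => hE.mul_mem_of_caldNorm_rpow_abs_mul_le hβ0 hβ1 hD
      (mem_upperBounds_multNormSet.1 hDB) hg
  refine ⟨⟨rpow_abs_mem_multSet_caldSet, fun hx => ?_⟩, ?_⟩
  · have hbdd := bddAbove_multNormSet_caldSet hβ0.le hβ1.le hx
    exact mem_multSet_of_forall_unitBall fun g hg =>
      (hBA _ (le_csSup hbdd hB) (fun r hr => le_csSup hbdd hr) g hg).1
  rw [multNorm_eq_sSup, multNorm_eq_sSup]
  refine sSup_eq_rpow_sSup_of_upperBounds hβ0 hA hB (fun M hM0 hMA => ?_) fun D hD0 hDB => ?_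
  · have hMA := mem_upperBounds_multNormSet.1 hMA
    exact mem_upperBounds_multNormSet.2 fun z hz hzn => caldNorm_rpow_abs_mul_le hβ0.le hM0
      (fun g hg => hE.mul_mem_of_norm_mul_le (fun g hg _ => hMA g hg.1 hg.2) hg) hz hzn
  · exact mem_upperBounds_multNormSet.2 fun g hg hgn => (hBA D hD0 hDB g ⟨hg, hgn⟩).2
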